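/- Let α ∈ (1/2, 1) and s > (1−α)/2 with s ≤ 1/2. Then sup over n ∈ ℤ of the sum over pairs of nonzero integers (k, j) with 0 < |kj| ≲ |n|^{2−2α} of ⟨n⟩^{2s}/(⟨n+k⟩^{2s} ⟨n+k+j⟩^{2s} ⟨n+j⟩^{2s}) is finite; in fact the sum is bounded by C ⟨n⟩^{2−2α−4s} log⟨n⟩. -/

import Mathlib

open Real

/-- Japanese bracket of an integer. -/
noncomputable def jb (m : ℤ) : ℝ := Real.sqrt (1 + (m : ℝ) ^ 2)

/-!
Once `A |n| ^ (2 - 2α) ≤ |n| / 4`, every admissible pair has `|k|, |j| ≤ |n| / 4`, so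
`⟨n + k⟩`, `⟨n + j⟩`, `⟨n + k + j⟩` are all at least `⟨n⟩ / 2` and each summand is at most
`8 ^ (2s) ⟨n⟩ ^ (-4s)`. The pairs of nonzero integers with `|k j| ≤ M` number at most
`4 M H_⌊M⌋ ≤ 4 M (1 + log M)`, which for `M = A |n| ^ (2 - 2α)` is `O(⟨n⟩ ^ (2 - 2α) log ⟨n⟩)`.
The finitely many remaining `n` only enlarge the constant.
-/

open Finset Filter Asymptotics

lemma jb_sq (m : ℤ) : jb m ^ 2 = 1 + (m : ℝ) ^ 2 := sq_sqrt (by positivity)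

lemma one_le_jb (m : ℤ) : 1 ≤ jb m := one_le_sqrt.2 (by nlinarith)

lemma jb_pos (m : ℤ) : 0 < jb m := one_pos.trans_le (one_le_jb m)

lemma abs_le_jb (m : ℤ) : |(m : ℝ)| ≤ jb m := abs_le_sqrt (by linarith)

lemma jb_le_two_mul_jb_add {a b : ℤ} (h : 2 * |(b : ℝ)| ≤ |(a : ℝ)|) :
    jb a ≤ 2 * jb (a + b) := by
  have hab : |(a : ℝ)| ≤ 2 * |(a : ℝ) + b| := by
    have := abs_sub_abs_le_abs_sub (a : ℝ) (-b)
    rw [abs_neg, sub_neg_eq_add] at this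
    linarith
  refine sqrt_le_iff.2 ⟨by linarith [jb_pos (a + b)], ?_⟩
  rw [mul_pow, jb_sq, Int.cast_add]
  nlinarith [sq_abs (a : ℝ), sq_abs ((a : ℝ) + b), abs_nonneg (a : ℝ)]

lemma log_jb_pos {n : ℤ} (hn : n ≠ 0) : 0 < log (jb n) := by
  refine log_pos ((lt_sqrt zero_le_one).2 ?_)
  have : (0 : ℝ) < (n : ℝ) ^ 2 := by positivity
  linarith

lemma one_le_log_jb {n : ℤ} (hn : 3 ≤ |(n : ℝ)|) : 1 ≤ log (jb n) := by
  rw [le_log_iff_exp_le (jb_pos n)]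
  linarith [exp_one_lt_d9, abs_le_jb n]

lemma tendsto_abs_intCast_cofinite : Tendsto (fun n : ℤ => |(n : ℝ)|) cofinite atTop := by
  have := tendsto_norm_cocompact_atTop (E := ℤ)
  rwa [cocompact_eq_cofinite, funext Int.norm_eq_abs] at this

lemma eventually_mul_rpow_le_self (c : ℝ) {e : ℝ} (he : e < 1) :
    ∀ᶠ x : ℝ in atTop, c * x ^ e ≤ x := by
  filter_upwards [(tendsto_rpow_atTop (sub_pos.2 he)).eventually_ge_atTop c,
    eventually_gt_atTop 0] with x hc hx
  calc c * x ^ e ≤ x ^ (1 - e) * x ^ e := by gcongr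
    _ = x := by rw [← rpow_add hx, sub_add_cancel, rpow_one]

lemma one_add_log_mul_rpow_le {A e x y : ℝ} (hA : 0 < A) (he0 : 0 ≤ e) (he2 : e ≤ 2)
    (hx : 1 ≤ x) (hxy : x ≤ y) (hy : 1 ≤ log y) :
    1 + log (A * x ^ e) ≤ (|log A| + 3) * log y := by
  have hlog : log x ≤ log y := log_le_log (by linarith) hxy
  rw [log_mul hA.ne' (by positivity), log_rpow (by linarith)]
  nlinarith [le_abs_self (log A), abs_nonneg (log A), log_nonneg hx]

lemma rpow_div_mul_mul_le {t a b c d : ℝ} (ht : 0 ≤ t) (ha : 0 < a)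
    (hb : a ≤ 2 * b) (hc : a ≤ 2 * c) (hd : a ≤ 2 * d) :
    a ^ t / (b ^ t * c ^ t * d ^ t) ≤ 8 ^ t * a ^ (-2 * t) := by
  have hbcd : a ^ 3 / 8 ≤ b * c * d := by
    have := mul_le_mul (mul_le_mul hb hc ha.le (by linarith)) hd ha.le (by nlinarith)
    linarith
  have hpos : 0 < b * c * d := lt_of_lt_of_le (by positivity) hbcd
  have hquot : a / (b * c * d) ≤ 8 * a ^ (-2 : ℝ) := by
    rw [rpow_neg ha.le, rpow_two, ← div_eq_mul_inv, div_le_div_iff₀ hpos (by positivity)]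
    nlinarith
  calc a ^ t / (b ^ t * c ^ t * d ^ t) = (a / (b * c * d)) ^ t := by
        rw [div_rpow ha.le hpos.le, mul_rpow (by nlinarith) (by linarith),
          mul_rpow (by linarith) (by linarith)]
    _ ≤ (8 * a ^ (-2 : ℝ)) ^ t := by gcongr
    _ = 8 ^ t * a ^ (-2 * t) := by
        rw [mul_rpow (by norm_num) (by positivity), ← rpow_mul ha.le]

noncomputable def natHyperbolicPairs (M : ℝ) : Finset (ℕ × ℕ) :=
  (Icc 1 ⌊M⌋₊ ×ˢ Icc 1 ⌊M⌋₊).filter fun p => ((p.1 * p.2 : ℕ) : ℝ) ≤ M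

lemma card_filter_mul_le_le_div {M : ℝ} (hM : 0 ≤ M) {a : ℕ} (ha : 1 ≤ a) (K : ℕ) :
    (((Icc 1 K).filter fun b => ((a * b : ℕ) : ℝ) ≤ M).card : ℝ) ≤ M / a := by
  have ha' : (0 : ℝ) < a := by exact_mod_cast ha
  have hsub : (Icc 1 K).filter (fun b => ((a * b : ℕ) : ℝ) ≤ M) ⊆ Icc 1 ⌊M / a⌋₊ := by
    intro b hb
    simp only [mem_filter, mem_Icc] at hb ⊢
    refine ⟨hb.1.1, Nat.le_floor ?_⟩
    rw [le_div_iff₀ ha', mul_comm]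
    exact_mod_cast hb.2
  calc _ ≤ ((Icc 1 ⌊M / a⌋₊).card : ℝ) := by exact_mod_cast card_le_card hsub
    _ ≤ M / a := by
      rw [Nat.card_Icc, Nat.add_sub_cancel]
      exact Nat.floor_le (by positivity)

lemma card_natHyperbolicPairs_le {M : ℝ} (hM : 0 ≤ M) :
    ((natHyperbolicPairs M).card : ℝ) ≤ M * harmonic ⌊M⌋₊ := by
  calc ((natHyperbolicPairs M).card : ℝ)
      = ∑ a ∈ Icc 1 ⌊M⌋₊, (((Icc 1 ⌊M⌋₊).filter fun b => ((a * b : ℕ) : ℝ) ≤ M).card : ℝ) := by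
        simp only [natHyperbolicPairs, card_filter, sum_product, Nat.cast_sum]
    _ ≤ ∑ a ∈ Icc 1 ⌊M⌋₊, M / a :=
        sum_le_sum fun a ha => card_filter_mul_le_le_div hM (mem_Icc.1 ha).1 _
    _ = M * harmonic ⌊M⌋₊ := by
        simp only [harmonic_eq_sum_Icc, Rat.cast_sum, Rat.cast_inv, Rat.cast_natCast, mul_sum,
          div_eq_mul_inv]

noncomputable def hyperbolicPairs (M : ℝ) : Finset (ℤ × ℤ) :=
  (Icc (-⌊M⌋) ⌊M⌋ ×ˢ Icc (-⌊M⌋) ⌊M⌋).filter fun p => p.1 ≠ 0 ∧ p.2 ≠ 0 ∧ |(p.1 : ℝ) * p.2| ≤ M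

lemma abs_le_of_abs_mul_le {a b : ℤ} (hb : b ≠ 0) {M : ℝ} (h : |(a : ℝ) * b| ≤ M) :
    |(a : ℝ)| ≤ M := by
  have : (1 : ℝ) ≤ |(b : ℝ)| := by exact_mod_cast Int.one_le_abs hb
  rw [abs_mul] at h
  nlinarith [abs_nonneg (a : ℝ)]

lemma mem_hyperbolicPairs {M : ℝ} {p : ℤ × ℤ} :
    p ∈ hyperbolicPairs M ↔ p.1 ≠ 0 ∧ p.2 ≠ 0 ∧ |(p.1 : ℝ) * p.2| ≤ M := by
  have hbox : ∀ a b : ℤ, b ≠ 0 → |(a : ℝ) * b| ≤ M → -⌊M⌋ ≤ a ∧ a ≤ ⌊M⌋ := fun a b hb h =>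
    abs_le.1 (Int.le_floor.2 (by push_cast; exact abs_le_of_abs_mul_le hb h))
  simp only [hyperbolicPairs, mem_filter, mem_product, mem_Icc, and_iff_right_iff_imp]
  rintro ⟨h1, h2, h3⟩
  exact ⟨hbox _ _ h2 h3, hbox _ _ h1 (by rwa [mul_comm])⟩

lemma Int.sign_mem_of_ne_zero {a : ℤ} (ha : a ≠ 0) : a.sign ∈ ({1, -1} : Finset ℤ) := by
  rcases ha.lt_or_gt with h | h <;> simp [Int.sign_eq_neg_one_of_neg, Int.sign_eq_one_of_pos, h]

lemma card_hyperbolicPairs_le {M : ℝ} (hM : 1 ≤ M) :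
    ((hyperbolicPairs M).card : ℝ) ≤ 4 * M * (1 + log M) := by
  -- `(k, j)` is determined by the signs and absolute values of `k` and `j`
  have hsub : hyperbolicPairs M ⊆ (({1, -1} ×ˢ {1, -1}) ×ˢ natHyperbolicPairs M).image
      fun q : (ℤ × ℤ) × (ℕ × ℕ) => (q.1.1 * q.2.1, q.1.2 * q.2.2) := by
    intro p hp
    obtain ⟨h1, h2, h3⟩ := mem_hyperbolicPairs.1 hp
    have hnat : ∀ a b : ℤ, a ≠ 0 → b ≠ 0 → |(a : ℝ) * b| ≤ M → a.natAbs ∈ Icc 1 ⌊M⌋₊ :=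
      fun a b ha hb h => mem_Icc.2 ⟨Int.natAbs_pos.2 ha,
        Nat.le_floor (by rw [Nat.cast_natAbs, Int.cast_abs]; exact abs_le_of_abs_mul_le hb h)⟩
    refine mem_image.2 ⟨((p.1.sign, p.2.sign), (p.1.natAbs, p.2.natAbs)), ?_,
      by simp only [Int.sign_mul_natAbs]⟩
    simp only [mem_product, Int.sign_mem_of_ne_zero h1, Int.sign_mem_of_ne_zero h2,
      natHyperbolicPairs, mem_filter, hnat _ _ h1 h2 h3, hnat _ _ h2 h1 (by rwa [mul_comm]), true_and]
    push_cast [Nat.cast_natAbs]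
    rwa [← abs_mul]
  calc ((hyperbolicPairs M).card : ℝ) ≤ ((({1, -1} ×ˢ {1, -1}) ×ˢ natHyperbolicPairs M).card : ℝ) :=
        by exact_mod_cast (card_le_card hsub).trans card_image_le
    _ ≤ 4 * (M * harmonic ⌊M⌋₊) := by
        rw [card_product, card_product, show (({1, -1} : Finset ℤ)).card = 2 by decide]
        push_cast
        linarith [card_natHyperbolicPairs_le (zero_le_one.trans hM)]
    _ ≤ 4 * M * (1 + log M) := by
        have hK : (0 : ℝ) < ⌊M⌋₊ := by exact_mod_cast Nat.floor_pos.2 hM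
        rw [mul_assoc]
        gcongr
        exact (harmonic_le_one_add_log _).trans (by gcongr; exact Nat.floor_le (by linarith))

noncomputable def trilinearWeight (s : ℝ) (n : ℤ) (p : ℤ × ℤ) : ℝ :=
  jb n ^ (2 * s) / (jb (n + p.1) ^ (2 * s) * jb (n + p.1 + p.2) ^ (2 * s) * jb (n + p.2) ^ (2 * s))

noncomputable def lowInteractionSum (s M : ℝ) (n : ℤ) : ℝ :=
  ∑' p : ℤ × ℤ, if p.1 ≠ 0 ∧ p.2 ≠ 0 ∧ |(p.1 : ℝ) * p.2| ≤ M then trilinearWeight s n p else 0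

lemma trilinearWeight_nonneg (s : ℝ) (n : ℤ) (p : ℤ × ℤ) : 0 ≤ trilinearWeight s n p := by
  have := jb_pos n
  have := jb_pos (n + p.1)
  have := jb_pos (n + p.1 + p.2)
  have := jb_pos (n + p.2)
  unfold trilinearWeight
  positivity

section LowInteraction

variable {s M : ℝ} {n : ℤ}

lemma trilinearWeight_le (hs : 0 ≤ s) {k j : ℤ} (hk : 4 * |(k : ℝ)| ≤ |(n : ℝ)|)
    (hj : 4 * |(j : ℝ)| ≤ |(n : ℝ)|) :
    trilinearWeight s n (k, j) ≤ 8 ^ (2 * s) * jb n ^ (-2 * (2 * s)) := by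
  have hkj : 2 * |((k + j : ℤ) : ℝ)| ≤ |(n : ℝ)| := by
    push_cast
    linarith [abs_add_le (k : ℝ) j]
  have := abs_nonneg (k : ℝ)
  have := abs_nonneg (j : ℝ)
  refine rpow_div_mul_mul_le (by linarith) (jb_pos n) (jb_le_two_mul_jb_add (b := k) (by linarith))
    ?_ (jb_le_two_mul_jb_add (b := j) (by linarith))
  rw [add_assoc]
  exact jb_le_two_mul_jb_add hkj

lemma lowInteractionSum_nonneg : 0 ≤ lowInteractionSum s M n :=
  tsum_nonneg fun p => by split_ifs <;> simp [trilinearWeight_nonneg]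

lemma lowInteractionSum_eq_sum :
    lowInteractionSum s M n = ∑ p ∈ hyperbolicPairs M, trilinearWeight s n p := by
  rw [lowInteractionSum, tsum_eq_sum fun p hp => if_neg (mt mem_hyperbolicPairs.2 hp)]
  exact sum_congr rfl fun p hp => if_pos (mem_hyperbolicPairs.1 hp)

lemma lowInteractionSum_of_lt_one (hM : M < 1) : lowInteractionSum s M n = 0 := by
  rw [lowInteractionSum_eq_sum, sum_eq_zero]
  intro p hp
  obtain ⟨h1, h2, h3⟩ := mem_hyperbolicPairs.1 hp
  have : (1 : ℝ) ≤ |(p.1 : ℝ) * p.2| := by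
    exact_mod_cast Int.one_le_abs (mul_ne_zero h1 h2)
  linarith

lemma lowInteractionSum_le (hs : 0 ≤ s) (hM : 1 ≤ M) (hMn : 4 * M ≤ |(n : ℝ)|) :
    lowInteractionSum s M n ≤ 4 * M * (1 + log M) * (8 ^ (2 * s) * jb n ^ (-2 * (2 * s))) := by
  rw [lowInteractionSum_eq_sum]
  calc ∑ p ∈ hyperbolicPairs M, trilinearWeight s n p
      ≤ (hyperbolicPairs M).card • (8 ^ (2 * s) * jb n ^ (-2 * (2 * s))) := by
        refine sum_le_card_nsmul _ _ _ fun p hp => ?_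
        obtain ⟨h1, h2, h3⟩ := mem_hyperbolicPairs.1 hp
        have hk := abs_le_of_abs_mul_le h2 h3
        have hj := abs_le_of_abs_mul_le h1 (show |(p.2 : ℝ) * p.1| ≤ M by rwa [mul_comm])
        exact trilinearWeight_le hs (by linarith) (by linarith)
    _ ≤ _ := by
        rw [nsmul_eq_mul]
        have := jb_pos n
        gcongr
        exact card_hyperbolicPairs_le hM

end LowInteraction

lemma isBigO_lowInteractionSum {α s A : ℝ} (hα : 1 / 2 < α) (hα1 : α < 1) (hA : 0 < A)
    (hs : 0 ≤ s) :
    (fun n : ℤ => lowInteractionSum s (A * |(n : ℝ)| ^ (2 - 2 * α)) n) =O[cofinite]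
      fun n => jb n ^ (2 - 2 * α - 4 * s) * log (jb n) := by
  have habs := tendsto_abs_intCast_cofinite
  refine IsBigO.of_bound (4 * A * (|log A| + 3) * 8 ^ (2 * s)) ?_
  filter_upwards [habs.eventually (eventually_ge_atTop 3),
    habs.eventually (((tendsto_rpow_atTop (by linarith : 0 < 2 - 2 * α)).const_mul_atTop
      hA).eventually_ge_atTop 1),
    habs.eventually (eventually_mul_rpow_le_self (4 * A) (by linarith : 2 - 2 * α < 1))]
    with n h3 h1 h4
  have hlog := one_le_log_jb h3
  have hjb := jb_pos n
  rw [norm_of_nonneg lowInteractionSum_nonneg, norm_of_nonneg (by positivity)]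
  calc lowInteractionSum s (A * |(n : ℝ)| ^ (2 - 2 * α)) n
      ≤ 4 * (A * |(n : ℝ)| ^ (2 - 2 * α)) * (1 + log (A * |(n : ℝ)| ^ (2 - 2 * α)))
          * (8 ^ (2 * s) * jb n ^ (-2 * (2 * s))) :=
        lowInteractionSum_le hs h1 (by linarith)
    _ ≤ 4 * (A * jb n ^ (2 - 2 * α)) * ((|log A| + 3) * log (jb n))
          * (8 ^ (2 * s) * jb n ^ (-2 * (2 * s))) := by
        have hMle : A * |(n : ℝ)| ^ (2 - 2 * α) ≤ A * jb n ^ (2 - 2 * α) :=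
          mul_le_mul_of_nonneg_left (rpow_le_rpow (abs_nonneg _) (abs_le_jb n) (by linarith)) hA.le
        have hlogle := one_add_log_mul_rpow_le (e := 2 - 2 * α) hA (by linarith) (by linarith)
          (by linarith) (abs_le_jb n) hlog
        have := log_nonneg h1
        exact mul_le_mul_of_nonneg_right
          (mul_le_mul (by linarith) hlogle (by positivity) (by positivity)) (by positivity)
    _ = 4 * A * (|log A| + 3) * 8 ^ (2 * s) * (jb n ^ (2 - 2 * α - 4 * s) * log (jb n)) := by
        rw [show 2 - 2 * α - 4 * s = 2 - 2 * α + -2 * (2 * s) by ring, rpow_add hjb]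
        ring

theorem stmt_14_general (α s A : ℝ) (hα : 1 / 2 < α) (hα1 : α < 1)
    (hs : (1 - α) / 2 < s) (hA : 0 < A) :
    ∃ C > 0, ∀ n : ℤ,
      (∑' p : ℤ × ℤ,
        if p.1 ≠ 0 ∧ p.2 ≠ 0 ∧ (|p.1 * p.2| : ℝ) ≤ A * (|n| : ℝ) ^ (2 - 2 * α) then
          jb n ^ (2 * s) /
            (jb (n + p.1) ^ (2 * s) * jb (n + p.1 + p.2) ^ (2 * s) * jb (n + p.2) ^ (2 * s))
        else 0)
        ≤ C * jb n ^ (2 - 2 * α - 4 * s) * Real.log (jb n) := by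
  obtain ⟨C, hC, hbound⟩ :=
    bound_of_isBigO_cofinite (isBigO_lowInteractionSum hα hα1 hA (by linarith : 0 ≤ s))
  refine ⟨C, hC, fun n => ?_⟩
  show lowInteractionSum s (A * |(n : ℝ)| ^ (2 - 2 * α)) n ≤ _
  rcases eq_or_ne n 0 with rfl | hn
  -- both sides vanish at `n = 0`, where `log ⟨0⟩ = 0`
  · have hM : A * |((0 : ℤ) : ℝ)| ^ (2 - 2 * α) < 1 := by
      simp [zero_rpow (by linarith : 2 - 2 * α ≠ 0)]
    rw [lowInteractionSum_of_lt_one hM]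
    simp [jb]
  · have hg : 0 < jb n ^ (2 - 2 * α - 4 * s) * log (jb n) :=
      mul_pos (rpow_pos_of_pos (jb_pos n) _) (log_jb_pos hn)
    have := hbound hg.ne'
    rwa [norm_of_nonneg lowInteractionSum_nonneg, norm_of_nonneg hg.le, ← mul_assoc] at this

/-- low-interaction sum in the trilinear estimate,
`∑_{0<|kj| ≤ A|n|^{2-2α}} ⟨n⟩^{2s}/(⟨n+k⟩^{2s}⟨n+k+j⟩^{2s}⟨n+j⟩^{2s}) ≲ ⟨n⟩^{2-2α-4s} log⟨n⟩`.
Here `p.1 = k`, `p.2 = j`. -/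
theorem stmt_14 (α s A : ℝ) (hα : 1 / 2 < α) (hα1 : α < 1)
    (hs : (1 - α) / 2 < s) (hs2 : s ≤ 1 / 2) (hA : 0 < A) :
    ∃ C > 0, ∀ n : ℤ,
      (∑' p : ℤ × ℤ,
        if p.1 ≠ 0 ∧ p.2 ≠ 0 ∧ (|p.1 * p.2| : ℝ) ≤ A * (|n| : ℝ) ^ (2 - 2 * α) then
          jb n ^ (2 * s) /
            (jb (n + p.1) ^ (2 * s) * jb (n + p.1 + p.2) ^ (2 * s) * jb (n + p.2) ^ (2 * s))
        else 0)
        ≤ C * jb n ^ (2 - 2 * α - 4 * s) * Real.log (jb n) :=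
  stmt_14_general α s A hα hα1 hs hA
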